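/- arXiv:2301.13677 — 4 statements merged into one kernel-verified Lean document; each statement's English description precedes it below -/
import Mathlib

section
/- Let B_r(0) ⊂ ℝ² be the open ball of radius r > 0 centered at the origin, and let ψ be continuous on ℝ² \ B_r(0), twice continuously differentiable on the complement of the closed ball, bounded from below, and satisfy Δψ ≤ 0 on ℝ² \ cl(B_r(0)). Then ψ attains its infimum over ℝ² \ B_r(0) at some point of the boundary circle ∂B_r(0); i.e., ψ(x) ≥ min_{|y|=r} ψ(y) for all |x| ≥ r. -/
open Real MeasureTheory Filter Set

noncomputable def lap {n : ℕ} (f : EuclideanSpace ℝ (Fin n) → ℝ) (x : EuclideanSpace ℝ (Fin n)) : ℝ :=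
  ∑ i : Fin n, iteratedFDeriv ℝ 2 f x ![EuclideanSpace.single i 1, EuclideanSpace.single i 1]

/-!
Let `m` be the minimum of `ψ` on the circle `‖x‖ = r` and `B` a lower bound of `ψ`. For `ε > 0`
the function `ψ + ε log ‖·‖` is superharmonic, and on a circle of radius `R` with
`B + ε log R ≥ m + ε log r` it is at least `m + ε log r`, as it is on the inner circle. The weak
minimum principle on the annulus `r ≤ ‖x‖ ≤ R` then gives `ψ x ≥ m - ε log (‖x‖ / r)`, and
`ε → 0` finishes. The minimum principle itself comes from the second-derivative test: after
subtracting `δ ‖x‖²` the Laplacian is strictly negative, so no minimum can be interior.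
-/

open Topology InnerProductSpace Laplacian

theorem lap_eq_laplacian {n : ℕ} (f : EuclideanSpace ℝ (Fin n) → ℝ) : lap f = Δ f := by
  rw [laplacian_eq_iteratedFDeriv_orthonormalBasis f (EuclideanSpace.basisFun (Fin n) ℝ)]
  ext x
  simp [lap]

theorem le_of_forall_pos_le_add_mul {a b c : ℝ} (h : ∀ ε > 0, a ≤ b + ε * c) : a ≤ b :=
  ge_of_tendsto (tendsto_nhdsWithin_of_tendsto_nhds <|
    (by fun_prop : Continuous fun ε : ℝ => b + ε * c).tendsto' 0 b (by simp))
    (eventually_nhdsWithin_of_forall (s := Ioi 0) h)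

theorem IsLocalMin.deriv_deriv_nonneg {f : ℝ → ℝ} {a : ℝ} (h : IsLocalMin f a)
    (hf : ContinuousAt f a) : 0 ≤ deriv (deriv f) a := by
  by_contra! hneg
  -- a negative second derivative would make `a` a local maximum too, so `f` is locally constant
  have hconst : f =ᶠ[𝓝 a] fun _ => f a :=
    (h.and (isLocalMax_of_deriv_deriv_neg hneg h.deriv_eq_zero hf)).mono
      fun x hx => le_antisymm hx.2 hx.1
  have : deriv (deriv f) a = 0 := by
    rw [hconst.deriv.deriv_eq]
    simp
  exact hneg.ne this

section

variable {E : Type*} [NormedAddCommGroup E] [NormedSpace ℝ E]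

theorem IsLocalMin.iteratedFDeriv_two_nonneg {f : E → ℝ} {x : E} (h : IsLocalMin f x)
    (hf : ContDiffAt ℝ 2 f x) (v : E) : 0 ≤ iteratedFDeriv ℝ 2 f x ![v, v] := by
  set ℓ : ℝ → E := fun t => x + t • v
  have hℓ0 : ℓ 0 = x := by simp [ℓ]
  have hℓ : ∀ t, HasDerivAt ℓ v t := fun t =>
    HasDerivAt.const_add x (by simpa using (hasDerivAt_id t).smul_const v)
  have hℓc : ContinuousAt ℓ 0 := (hℓ 0).continuousAt
  have hderiv : deriv (f ∘ ℓ) =ᶠ[𝓝 0] fun t => fderiv ℝ f (ℓ t) v := by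
    have hreg : ∀ᶠ t in 𝓝 (0 : ℝ), ContDiffAt ℝ 2 f (ℓ t) :=
      hℓc.eventually (by simpa [hℓ0] using hf.eventually (by simp))
    filter_upwards [hreg] with t ht
    exact ((ht.differentiableAt (by simp)).hasFDerivAt.comp_hasDerivAt t (hℓ t)).deriv
  have hderiv2 : HasDerivAt (fun t => fderiv ℝ f (ℓ t) v) (fderiv ℝ (fderiv ℝ f) x v v) 0 := by
    have h1 := ((hf.fderiv_right (m := 1) le_rfl).differentiableAt (by simp)).hasFDerivAt
    rw [← hℓ0] at h1
    simpa [hℓ0] using (h1.comp_hasDerivAt (0 : ℝ) (hℓ 0)).clm_apply (hasDerivAt_const (0 : ℝ) v)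
  have hmin : IsLocalMin (f ∘ ℓ) 0 := IsLocalMin.comp_continuous (by rwa [hℓ0]) hℓc
  rw [iteratedFDeriv_two_apply]
  simpa [hderiv.deriv_eq, hderiv2.deriv] using
    hmin.deriv_deriv_nonneg (hf.continuousAt.comp_of_eq hℓc hℓ0)

end

section

variable {E : Type*} [NormedAddCommGroup E] [InnerProductSpace ℝ E] [FiniteDimensional ℝ E]

theorem IsLocalMin.laplacian_nonneg {f : E → ℝ} {x : E} (h : IsLocalMin f x)
    (hf : ContDiffAt ℝ 2 f x) : 0 ≤ Δ f x := by
  rw [laplacian_eq_iteratedFDeriv_stdOrthonormalBasis]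
  exact Finset.sum_nonneg fun i _ => h.iteratedFDeriv_two_nonneg hf _

theorem laplacian_norm_sq (x : E) :
    Δ (fun y : E => ‖y‖ ^ 2) x = 2 * Module.finrank ℝ E := by
  have hsecond : fderiv ℝ (fderiv ℝ fun y : E => ‖y‖ ^ 2) x =
      2 • innerSL ℝ (E := E) := by
    rw [fderiv_norm_sq]
    exact (2 • innerSL ℝ (E := E)).fderiv
  rw [laplacian_eq_iteratedFDeriv_stdOrthonormalBasis]
  have hterm : ∀ i, iteratedFDeriv ℝ 2 (fun y : E => ‖y‖ ^ 2) x
      ![stdOrthonormalBasis ℝ E i, stdOrthonormalBasis ℝ E i] = 2 := fun i => by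
    rw [iteratedFDeriv_two_apply, hsecond]
    simp only [Matrix.cons_val_zero, Matrix.cons_val_one, smul_apply]
    rw [innerSL_apply_apply, real_inner_self_eq_norm_sq, (stdOrthonormalBasis ℝ E).orthonormal.1 i]
    norm_num
  simp [hterm, ← Module.finrank_eq_card_basis (stdOrthonormalBasis ℝ E).toBasis, mul_comm]

theorem IsCompact.exists_isMinOn_notMem_of_laplacian_neg {K U : Set E} (hK : IsCompact K)
    (hKne : K.Nonempty) (hU : IsOpen U) (hUK : U ⊆ K) {f : E → ℝ} (hcont : ContinuousOn f K)
    (hreg : ContDiffOn ℝ 2 f U) (hlap : ∀ x ∈ U, Δ f x < 0) :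
    ∃ p ∈ K, p ∉ U ∧ IsMinOn f K p := by
  obtain ⟨p, hpK, hmin⟩ := hK.exists_isMinOn hKne hcont
  refine ⟨p, hpK, fun hpU => ?_, hmin⟩
  have hnhds := hU.mem_nhds hpU
  exact (hlap p hpU).not_ge
    ((hmin.isLocalMin (mem_of_superset hnhds hUK)).laplacian_nonneg (hreg.contDiffAt hnhds))

theorem IsCompact.le_of_forall_sdiff_le_of_laplacian_nonpos [Nontrivial E] {K U : Set E}
    (hK : IsCompact K) (hU : IsOpen U) (hUK : U ⊆ K) {f : E → ℝ} (hcont : ContinuousOn f K)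
    (hreg : ContDiffOn ℝ 2 f U) (hlap : ∀ x ∈ U, Δ f x ≤ 0) {m : ℝ}
    (hm : ∀ y ∈ K \ U, m ≤ f y) {x : E} (hx : x ∈ K) : m ≤ f x := by
  obtain ⟨C, hC⟩ := (hK.image (continuous_norm.pow 2)).bddAbove
  have hsq : ContDiff ℝ 2 fun y : E => ‖y‖ ^ 2 := contDiff_norm_sq ℝ
  refine le_of_forall_pos_le_add_mul (c := C) fun δ hδ => ?_
  have hlap' : ∀ y ∈ U, (Δ (f - δ • fun y : E => ‖y‖ ^ 2) : E → ℝ) y < 0 := by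
    intro y hy
    have hfy := hreg.contDiffAt (hU.mem_nhds hy)
    have hδsq : ContDiffAt ℝ 2 (δ • fun y : E => ‖y‖ ^ 2) y := hsq.contDiffAt.const_smul δ
    rw [hfy.laplacian_sub hδsq, laplacian_smul δ hsq.contDiffAt,
      laplacian_norm_sq, smul_eq_mul]
    have := hlap y hy
    have : (0 : ℝ) < Module.finrank ℝ E := by exact_mod_cast Module.finrank_pos
    nlinarith
  obtain ⟨p, hpK, hpU, hpmin⟩ := hK.exists_isMinOn_notMem_of_laplacian_neg ⟨x, hx⟩ hU hUK
    (hcont.sub (hsq.continuous.continuousOn.const_smul δ))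
    (hreg.sub (hsq.contDiffOn.const_smul δ)) hlap'
  have hpx : f p - δ * ‖p‖ ^ 2 ≤ f x - δ * ‖x‖ ^ 2 := by simpa using hpmin hx
  have hpC : ‖p‖ ^ 2 ≤ C := hC (mem_image_of_mem _ hpK)
  nlinarith [hm p ⟨hpK, hpU⟩, sq_nonneg ‖x‖]

variable {E' F : Type*} [NormedAddCommGroup E'] [InnerProductSpace ℝ E'] [FiniteDimensional ℝ E']
  [NormedAddCommGroup F] [NormedSpace ℝ F]

theorem laplacian_comp_linearIsometryEquiv (L : E ≃ₗᵢ[ℝ] E') (f : E' → F) (x : E) :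
    Δ (f ∘ L) x = Δ f (L x) := by
  have hcomp : iteratedFDeriv ℝ 2 (f ∘ L) x =
      (iteratedFDeriv ℝ 2 f (L x)).compContinuousLinearMap fun _ => (L : E →L[ℝ] E') := by
    rw [← iteratedFDerivWithin_univ, ← iteratedFDerivWithin_univ]
    simpa using L.toContinuousLinearEquiv.iteratedFDerivWithin_comp_right f uniqueDiffOn_univ
      (mem_univ (L x)) 2
  rw [laplacian_eq_iteratedFDeriv_orthonormalBasis _ (stdOrthonormalBasis ℝ E),
    laplacian_eq_iteratedFDeriv_orthonormalBasis _ ((stdOrthonormalBasis ℝ E).map L)]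
  refine Finset.sum_congr rfl fun i _ => ?_
  rw [hcomp, ContinuousMultilinearMap.compContinuousLinearMap_apply]
  congr 1
  ext j
  fin_cases j <;> rfl

theorem HarmonicAt.comp_linearIsometryEquiv {f : E' → F} {x : E} (L : E ≃ₗᵢ[ℝ] E')
    (h : HarmonicAt f (L x)) : HarmonicAt (f ∘ L) x := by
  refine ⟨h.1.comp x L.contDiff.contDiffAt, ?_⟩
  filter_upwards [L.continuous.continuousAt.eventually h.2] with y hy
  simpa [laplacian_comp_linearIsometryEquiv] using hy

end

theorem harmonicAt_log_norm_euclideanSpace {y : EuclideanSpace ℝ (Fin 2)} (hy : y ≠ 0) :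
    HarmonicAt (fun y : EuclideanSpace ℝ (Fin 2) => log ‖y‖) y := by
  let L := Complex.orthonormalBasisOneI.repr.symm
  have h : HarmonicAt (fun z : ℂ => log ‖z‖) (L y) :=
    analyticAt_id.harmonicAt_log_norm (by simpa using hy)
  simpa [Function.comp_def] using HarmonicAt.comp_linearIsometryEquiv L h

theorem laplacian_add_smul_log_norm {ψ : EuclideanSpace ℝ (Fin 2) → ℝ}
    {y : EuclideanSpace ℝ (Fin 2)} (hψ : ContDiffAt ℝ 2 ψ y) (hy : y ≠ 0) (ε : ℝ) :
    Δ (ψ + ε • fun y : EuclideanSpace ℝ (Fin 2) => log ‖y‖) y = Δ ψ y := by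
  have hlog := harmonicAt_log_norm_euclideanSpace hy
  have hεlog : ContDiffAt ℝ 2 (ε • fun y : EuclideanSpace ℝ (Fin 2) => log ‖y‖) y :=
    hlog.1.const_smul ε
  rw [hψ.laplacian_add hεlog, laplacian_smul ε hlog.1, hlog.2.self_of_nhds]
  simp

theorem le_add_mul_log_of_laplacian_nonpos {r : ℝ} (hr : 0 < r)
    {ψ : EuclideanSpace ℝ (Fin 2) → ℝ} (hcont : ContinuousOn ψ {x | r ≤ ‖x‖})
    (hreg : ContDiffOn ℝ 2 ψ {x | r < ‖x‖}) (hbdd : BddBelow (ψ '' {x | r ≤ ‖x‖}))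
    (hsup : ∀ x, r < ‖x‖ → Δ ψ x ≤ 0) {m : ℝ} (hm : ∀ y, ‖y‖ = r → m ≤ ψ y)
    {ε : ℝ} (hε : 0 < ε) {x : EuclideanSpace ℝ (Fin 2)} (hx : r ≤ ‖x‖) :
    m ≤ ψ x + ε * (log ‖x‖ - log r) := by
  obtain ⟨B, hB⟩ := hbdd
  obtain ⟨R, hxR, hR⟩ : ∃ R, ‖x‖ ≤ R ∧ m + ε * log r ≤ B + ε * log R :=
    ((eventually_ge_atTop ‖x‖).and ((tendsto_atTop_add_const_left _ B
      (tendsto_log_atTop.const_mul_atTop hε)).eventually_ge_atTop _)).exists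
  set K := Metric.closedBall (0 : EuclideanSpace ℝ (Fin 2)) R \ Metric.ball 0 r
  set U := Metric.ball (0 : EuclideanSpace ℝ (Fin 2)) R \ Metric.closedBall 0 r
  have hKr : ∀ y ∈ K, r ≤ ‖y‖ := fun y hy => by simpa using hy.2
  have hUr : ∀ y ∈ U, r < ‖y‖ := fun y hy => by simpa using hy.2
  have hne : ∀ y : EuclideanSpace ℝ (Fin 2), r < ‖y‖ → y ≠ 0 := fun y hy =>
    norm_pos_iff.1 (hr.trans hy)
  let f := ψ + ε • fun y : EuclideanSpace ℝ (Fin 2) => log ‖y‖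
  have hfcont : ContinuousOn f K := (hcont.mono hKr).add <|
    (continuous_norm.continuousOn.log fun y hy => (hr.trans_le (hKr y hy)).ne').const_smul ε
  have hfreg : ContDiffOn ℝ 2 f U := fun y hy =>
    ((hreg.mono hUr).contDiffWithinAt hy).add
      (((harmonicAt_log_norm_euclideanSpace (hne y (hUr y hy))).1.const_smul ε).contDiffWithinAt)
  have hflap : ∀ y ∈ U, Δ f y ≤ 0 := fun y hy => by
    rw [laplacian_add_smul_log_norm (hreg.contDiffAt
      ((isOpen_lt continuous_const continuous_norm).mem_nhds (hUr y hy))) (hne y (hUr y hy))]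
    exact hsup y (hUr y hy)
  have hboundary : ∀ y ∈ K \ U, m + ε * log r ≤ f y := by
    rintro y ⟨hyK, hyU⟩
    have hyr := hKr y hyK
    have hyR : ‖y‖ ≤ R := by simpa using hyK.1
    have hy : ‖y‖ = r ∨ ‖y‖ = R := by
      by_contra! hne
      exact hyU ⟨by simpa using hyR.lt_of_ne hne.2, by simpa using hyr.lt_of_ne' hne.1⟩
    simp only [f, Pi.add_apply, Pi.smul_apply, smul_eq_mul]
    rcases hy with hy | hy
    · rw [hy]
      linarith [hm y hy]
    · rw [hy]
      linarith [hB (mem_image_of_mem ψ hyr)]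
  have hK : IsCompact K := (isCompact_closedBall 0 R).diff Metric.isOpen_ball
  have hU : IsOpen U := Metric.isOpen_ball.sdiff Metric.isClosed_closedBall
  have hUK : U ⊆ K := sdiff_subset_sdiff Metric.ball_subset_closedBall Metric.ball_subset_closedBall
  have := hK.le_of_forall_sdiff_le_of_laplacian_nonpos hU hUK hfcont hfreg hflap hboundary
    (x := x) (by simpa [K] using ⟨hxR, hx⟩)
  simp only [f, Pi.add_apply, Pi.smul_apply, smul_eq_mul] at this
  linarith

theorem stmt_2 (r : ℝ) (hr : 0 < r) (ψ : EuclideanSpace ℝ (Fin 2) → ℝ)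
    (hcont : ContinuousOn ψ {x | r ≤ ‖x‖})
    (hreg : ContDiffOn ℝ 2 ψ {x | r < ‖x‖})
    (hbdd : BddBelow (ψ '' {x | r ≤ ‖x‖}))
    (hsup : ∀ x, r < ‖x‖ → lap ψ x ≤ 0) :
    ∃ x₀ : EuclideanSpace ℝ (Fin 2), ‖x₀‖ = r ∧
      ∀ x : EuclideanSpace ℝ (Fin 2), r ≤ ‖x‖ → ψ x₀ ≤ ψ x := by
  obtain ⟨x₀, hx₀, hmin⟩ := (isCompact_sphere (0 : EuclideanSpace ℝ (Fin 2)) r).exists_isMinOn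
    (NormedSpace.sphere_nonempty.2 hr.le) (hcont.mono fun y hy => by simp_all)
  refine ⟨x₀, by simpa using hx₀, fun x hx => ?_⟩
  refine le_of_forall_pos_le_add_mul (c := log ‖x‖ - log r) fun ε hε => ?_
  exact le_add_mul_log_of_laplacian_nonpos hr hcont hreg hbdd
    (by simpa [lap_eq_laplacian] using hsup) (fun y hy => hmin (by simpa using hy)) hε hx
end

section
/- Let n ≥ 3, ρ₀ > 0, and let v : [ρ₀, ∞) → (0, ∞) be a C² function with v' < 0 on (ρ₀, ∞), satisfying v''(r) + ((n-1)/r)v'(r) ≤ -c₁ v(r)^(n/(n-2)) for all r > ρ₀, with c₁ > 0. Then there exist constants k̃ > 0 and ρ₂ > ρ₀ such that v(r) ≤ k̃ r^(2-n) for all r > ρ₂. -/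
/-!
With `m = n - 1` the inequality says that the flux `t ^ m v'(t)` decreases at rate at least
`c₁ t ^ m v(t) ^ p`, where `p = n / (n - 2)`. Integrating from a fixed `s` to `r ≥ 2 s` and using
that `v` is decreasing gives `v'(r) ≤ -κ r v(r) ^ p`. Then `(v ^ (1 - p))' ≥ (p - 1) κ r`, so
`v ^ (1 - p)` grows at least like a multiple of `r ^ 2`; as `2 / (1 - p) = 2 - n`, this is the
decay `v(r) = O(r ^ (2 - n))`.
-/

open Real Set

theorem sub_le_sub_of_hasDerivAt_le {f g f' g' : ℝ → ℝ} {a b : ℝ} (hab : a ≤ b)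
    (hf : ∀ x ∈ Icc a b, HasDerivAt f (f' x) x) (hg : ∀ x ∈ Icc a b, HasDerivAt g (g' x) x)
    (hle : ∀ x ∈ Ioo a b, f' x ≤ g' x) : f b - f a ≤ g b - g a := by
  have hmono : MonotoneOn (g - f) (Icc a b) := by
    refine monotoneOn_of_hasDerivWithinAt_nonneg (f' := g' - f') (convex_Icc a b)
      (fun x hx => ((hg x hx).sub (hf x hx)).continuousAt.continuousWithinAt) (fun x hx => ?_)
      (fun x hx => ?_) <;> rw [interior_Icc] at hx
    · have hx' := Ioo_subset_Icc_self hx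
      exact ((hg x hx').sub (hf x hx')).hasDerivWithinAt
    · exact sub_nonneg.2 (hle x hx)
  have := hmono (left_mem_Icc.2 hab) (right_mem_Icc.2 hab) hab
  simp only [Pi.sub_apply] at this
  linarith

theorem hasDerivAt_pow_mul {u : ℝ → ℝ} {u' t : ℝ} (m : ℕ) (ht : t ≠ 0)
    (hu : HasDerivAt u u' t) :
    HasDerivAt (fun t => t ^ m * u t) (t ^ m * (u' + m / t * u t)) t := by
  refine ((hasDerivAt_pow m t).fun_mul hu).congr_deriv ?_
  rcases m with _ | k
  · simp
  · rw [pow_succ, Nat.add_sub_cancel]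
    field_simp
    push_cast
    ring

theorem sub_le_of_hasDerivAt_le_neg_pow_mul {w w' g : ℝ → ℝ} {m : ℕ} {s r : ℝ}
    (hs : 0 ≤ s) (hsr : s ≤ r) (hw : ∀ t ∈ Icc s r, HasDerivAt w (w' t) t)
    (hg : AntitoneOn g (Icc s r))
    (hle : ∀ t ∈ Ioo s r, w' t ≤ -(t ^ m * g t)) :
    w r - w s ≤ -(g r * (r ^ (m + 1) - s ^ (m + 1)) / (m + 1)) := by
  have hB : ∀ t ∈ Icc s r, HasDerivAt (fun t => -(g r * t ^ (m + 1) / (m + 1)))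
      (-(g r * t ^ m)) t := fun t _ => by
    refine (((hasDerivAt_pow (m + 1) t).const_mul (g r)).div_const
      ((m : ℝ) + 1)).neg.congr_deriv ?_
    push_cast
    field_simp
  have key := sub_le_sub_of_hasDerivAt_le hsr hw hB fun t ht => by
    have hgt : g r ≤ g t := hg (Ioo_subset_Icc_self ht) (right_mem_Icc.2 hsr) ht.2.le
    have ht0 : 0 ≤ t ^ m := pow_nonneg (hs.trans ht.1.le) m
    nlinarith [hle t ht]
  linarith [key, show -(g r * r ^ (m + 1) / (m + 1)) - -(g r * s ^ (m + 1) / (m + 1))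
    = -(g r * (r ^ (m + 1) - s ^ (m + 1)) / (m + 1)) by ring]

theorem le_mul_rpow_of_mul_sq_le_rpow {x C r p : ℝ} (hx : 0 < x) (hC : 0 < C) (hr : 0 < r)
    (hp : 1 < p) (h : C * r ^ 2 ≤ x ^ (1 - p)) : x ≤ C ^ (1 - p)⁻¹ * r ^ (2 / (1 - p)) := by
  have hCr : 0 < C * r ^ 2 := by positivity
  have key := (le_rpow_inv_iff_of_neg hx hCr (by linarith : 1 - p < 0)).2 h
  rwa [mul_rpow hC.le (by positivity), ← rpow_natCast, ← rpow_mul hr.le, Nat.cast_ofNat,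
    ← div_eq_mul_inv] at key

section RadialSuperharmonic

variable {v : ℝ → ℝ} {ρ : ℝ}

theorem antitoneOn_Ioi_of_deriv_nonpos (hd1 : ∀ t, ρ < t → HasDerivAt v (deriv v t) t)
    (hdec : ∀ t, ρ < t → deriv v t ≤ 0) : AntitoneOn v (Ioi ρ) :=
  antitoneOn_of_hasDerivWithinAt_nonpos (convex_Ioi ρ)
    (fun t ht => (hd1 t ht).continuousAt.continuousWithinAt)
    (fun t ht => (hd1 t (interior_subset ht)).hasDerivWithinAt)
    (fun t ht => hdec t (interior_subset ht))

theorem deriv_le_neg_mul_self_mul_rpow {m : ℕ} {c p : ℝ} (hρ : 0 ≤ ρ) (hc : 0 ≤ c)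
    (hp : 0 ≤ p)
    (hd1 : ∀ t, ρ < t → HasDerivAt v (deriv v t) t)
    (hd2 : ∀ t, ρ < t → HasDerivAt (deriv v) (deriv (deriv v) t) t)
    (hdec : ∀ t, ρ < t → deriv v t ≤ 0) (hpos : ∀ t, ρ < t → 0 < v t)
    (hineq : ∀ t, ρ < t → deriv (deriv v) t + m / t * deriv v t ≤ -c * v t ^ p)
    {s r : ℝ} (hs : ρ < s) (hsr : 2 * s ≤ r) :
    deriv v r ≤ -(c / (2 * (m + 1))) * r * v r ^ p := by
  have hs0 : 0 < s := hρ.trans_lt hs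
  have hr0 : 0 < r := by linarith
  have hIcc : Icc s r ⊆ Ioi ρ := fun t ht => hs.trans_le ht.1
  have hflux : r ^ m * deriv v r - s ^ m * deriv v s
      ≤ -(c * v r ^ p * (r ^ (m + 1) - s ^ (m + 1)) / (m + 1)) :=
    sub_le_of_hasDerivAt_le_neg_pow_mul (w := fun t => t ^ m * deriv v t)
      (g := fun t => c * v t ^ p) hs0.le (by linarith)
      (fun t ht => hasDerivAt_pow_mul m (hs0.trans_le ht.1).ne' (hd2 t (hIcc ht)))
      (fun t ht t' ht' htt' => mul_le_mul_of_nonneg_left (rpow_le_rpow (hpos t' (hIcc ht')).le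
        (antitoneOn_Ioi_of_deriv_nonpos hd1 hdec (hIcc ht) (hIcc ht') htt') hp) hc)
      (fun t ht => by
        have := mul_le_mul_of_nonneg_left (hineq t (hIcc (Ioo_subset_Icc_self ht)))
          (pow_nonneg (hs0.trans ht.1).le m)
        linarith)
  have hws : s ^ m * deriv v s ≤ 0 := mul_nonpos_of_nonneg_of_nonpos (by positivity) (hdec s hs)
  have hsr' : s ^ (m + 1) ≤ r ^ (m + 1) / 2 := calc
    s ^ (m + 1) ≤ (r / 2) ^ (m + 1) := pow_le_pow_left₀ hs0.le (by linarith) _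
    _ = r ^ (m + 1) / 2 ^ (m + 1) := div_pow r 2 _
    _ ≤ r ^ (m + 1) / 2 := div_le_div_of_nonneg_left (by positivity) (by norm_num)
        (le_self_pow₀ (by norm_num) (by omega))
  have hvr := hpos r (by linarith)
  have key : r ^ m * deriv v r ≤ r ^ m * (-(c / (2 * (m + 1))) * r * v r ^ p) := calc
    r ^ m * deriv v r ≤ -(c * v r ^ p * (r ^ (m + 1) - s ^ (m + 1)) / (m + 1)) := by
      linarith [hflux]
    _ ≤ -(c * v r ^ p * (r ^ (m + 1) / 2) / (m + 1)) := by gcongr; linarith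
    _ = r ^ m * (-(c / (2 * (m + 1))) * r * v r ^ p) := by rw [pow_succ]; field_simp
  exact le_of_mul_le_mul_left key (by positivity)

theorem mul_sq_le_rpow_one_sub {p κ b : ℝ} (hρ : 0 ≤ ρ) (hp : 1 < p) (hκ : 0 ≤ κ)
    (hd1 : ∀ t, ρ < t → HasDerivAt v (deriv v t) t) (hpos : ∀ t, ρ < t → 0 < v t)
    (hb : ρ < b) (hbound : ∀ t, b ≤ t → deriv v t ≤ -κ * t * v t ^ p)
    {r : ℝ} (hr : 2 * b ≤ r) :
    (p - 1) * κ / 4 * r ^ 2 ≤ v r ^ (1 - p) := by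
  have hb0 : 0 ≤ b := hρ.trans hb.le
  have hIcc : Icc b r ⊆ Ioi ρ := fun t ht => hb.trans_le ht.1
  have hgrowth := sub_le_sub_of_hasDerivAt_le (f := fun t => (p - 1) * κ / 2 * t ^ 2)
    (f' := fun t => (p - 1) * κ * t) (g := fun t => v t ^ (1 - p)) (by linarith)
    (fun t _ => ((hasDerivAt_pow 2 t).const_mul _).congr_deriv (by push_cast; ring))
    (fun t ht => (hd1 t (hIcc ht)).rpow_const (Or.inl (hpos t (hIcc ht)).ne'))
    (fun t ht => by
      have hvt := hpos t (hIcc (Ioo_subset_Icc_self ht))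
      have hcancel : v t ^ p * v t ^ (1 - p - 1) = 1 := by
        rw [← rpow_add hvt]; norm_num
      have := mul_le_mul_of_nonneg_left (hbound t ht.1.le)
        (mul_nonneg (by linarith : 0 ≤ p - 1) (rpow_pos_of_pos hvt (1 - p - 1)).le)
      linear_combination this - (p - 1) * κ * t * hcancel)
  have hsq : 4 * b ^ 2 ≤ r ^ 2 := by nlinarith
  have hpκ : 0 ≤ (p - 1) * κ := mul_nonneg (by linarith) hκ
  nlinarith [rpow_nonneg (hpos b hb).le (1 - p), mul_le_mul_of_nonneg_left hsq hpκ]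

end RadialSuperharmonic

theorem ContDiffOn.hasDerivAt_deriv_and_deriv_deriv {f : ℝ → ℝ} {s : Set ℝ}
    (hf : ContDiffOn ℝ 2 f s) (hs : IsOpen s) {x : ℝ} (hx : x ∈ s) :
    HasDerivAt f (deriv f x) x ∧ HasDerivAt (deriv f) (deriv (deriv f) x) x :=
  ⟨((hf.differentiableOn (by norm_num)).differentiableAt (hs.mem_nhds hx)).hasDerivAt,
    (((hf.deriv_of_isOpen hs (by norm_num : (1 : WithTop ℕ∞) + 1 ≤ 2)).differentiableOn
      one_ne_zero).differentiableAt (hs.mem_nhds hx)).hasDerivAt⟩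

theorem stmt_6 (n : ℕ) (hn : 3 ≤ n) (ρ₀ c₁ : ℝ) (hρ₀ : 0 < ρ₀) (hc₁ : 0 < c₁)
    (v : ℝ → ℝ) (hv : ContDiffOn ℝ 2 v (Ici ρ₀))
    (hpos : ∀ r, ρ₀ ≤ r → 0 < v r)
    (hdec : ∀ r, ρ₀ < r → deriv v r < 0)
    (hineq : ∀ r, ρ₀ < r →
      deriv (deriv v) r + ((n : ℝ) - 1) / r * deriv v r ≤ -c₁ * v r ^ ((n : ℝ) / ((n : ℝ) - 2))) :
    ∃ k > 0, ∃ ρ₂ > ρ₀, ∀ r, ρ₂ < r → v r ≤ k * r ^ ((2 : ℝ) - n) := by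
  have hn' : (3 : ℝ) ≤ n := by exact_mod_cast hn
  have hm : ((n - 1 : ℕ) : ℝ) = n - 1 := by rw [Nat.cast_sub (by omega), Nat.cast_one]
  set p : ℝ := n / (n - 2)
  have hp : 1 < p := (one_lt_div (by linarith)).2 (by linarith)
  have hd := fun t (ht : ρ₀ < t) =>
    (hv.mono Ioi_subset_Ici_self).hasDerivAt_deriv_and_deriv_deriv isOpen_Ioi (mem_Ioi.2 ht)
  have hpos' : ∀ t, ρ₀ < t → 0 < v t := fun t ht => hpos t ht.le
  set κ := c₁ / (2 * n)
  have hderiv : ∀ t, 2 * (ρ₀ + 1) ≤ t → deriv v t ≤ -κ * t * v t ^ p := fun t ht => by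
    have := deriv_le_neg_mul_self_mul_rpow (m := n - 1) hρ₀.le hc₁.le (by positivity)
      (fun t ht => (hd t ht).1) (fun t ht => (hd t ht).2) (fun t ht => (hdec t ht).le) hpos'
      (fun t ht => hm ▸ hineq t ht) (lt_add_one ρ₀) ht
    rwa [hm, sub_add_cancel] at this
  refine ⟨((p - 1) * κ / 4) ^ (1 - p)⁻¹, by positivity, 4 * (ρ₀ + 1), by linarith,
    fun r hr => ?_⟩
  have hbound := le_mul_rpow_of_mul_sq_le_rpow (hpos' r (by linarith)) (by positivity)
    (by linarith) hp (mul_sq_le_rpow_one_sub hρ₀.le hp (by positivity) (fun t ht => (hd t ht).1)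
      hpos' (by linarith) hderiv (by linarith))
  have hn2 : (n : ℝ) - 2 ≠ 0 := by linarith
  rwa [show 2 / (1 - p) = 2 - (n : ℝ) by simp only [p]; field_simp; ring] at hbound
end

section
/- Let n ≥ 3 and p ∈ (n/(n-2), (n+2)/(n-2)). Set ε = n/(p+1) - (n-2)/2 > 0 and λ > 0. Suppose W ∈ C¹(ℝ) satisfies W(0) = 0, W'(u) = -λ u^p on [0, β], W' < 0 on (0, b) with b = κβ for some κ > 1, W'(b) = 0, and W'([0,b]) ⊂ [-λμβ^p, 0] for some μ > 1 with κμ < 1 + 2ε/(n-2). Then (n-2)/2 · W'(u)·u - n·W(u) > 0 for all u ∈ (0, b]. -/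
/-!
On `[0, β]` the potential is explicit, `W u = -λ u^(p+1)/(p+1)`, and the Pohozaev expression
equals `ε λ u^(p+1) > 0`. Past `β`, `W` is nonincreasing and `W' ≥ -λμβ^p`, so the expression is at
least its worst case `-(n-2)/2 · λμβ^p · b - n W(β) = λβ^(p+1) (n/(p+1) - (n-2)/2 · κμ)`, which is
positive precisely because `κμ < 1 + 2ε/(n-2)`.
-/

open Real Set

namespace Pohozaev

noncomputable def expr (d : ℝ) (W : ℝ → ℝ) (u : ℝ) : ℝ :=
  (d - 2) / 2 * deriv W u * u - d * W u

theorem eqOn_Icc_of_deriv_eq_mul_rpow {W : ℝ → ℝ} {c p β : ℝ} (hp : 0 ≤ p)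
    (hW : Differentiable ℝ W) (hW0 : W 0 = 0)
    (hW' : ∀ u ∈ Icc 0 β, deriv W u = c * u ^ p) :
    ∀ u ∈ Icc 0 β, W u = c / (p + 1) * u ^ (p + 1) := by
  have hp1 : p + 1 ≠ 0 := by positivity
  have hprim (x : ℝ) : HasDerivAt (fun u ↦ c / (p + 1) * u ^ (p + 1)) (c * x ^ p) x := by
    refine ((hasDerivAt_rpow_const (p := p + 1) (Or.inr (by linarith))).const_mul
      (c / (p + 1))).congr_deriv ?_
    rw [add_sub_cancel_right]
    field_simp
  refine eq_of_has_deriv_right_eq (fun x hx ↦ ?_) (fun x _ ↦ (hprim x).hasDerivWithinAt)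
    hW.continuous.continuousOn
    (continuous_const.mul (continuous_rpow_const (by positivity))).continuousOn
    (by simp [hW0, zero_rpow hp1])
  rw [← hW' x (Ico_subset_Icc_self hx)]
  exact (hW x).hasDerivAt.hasDerivWithinAt

theorem expr_eq_of_rpow {d lam p u : ℝ} {W : ℝ → ℝ} (hp1 : p + 1 ≠ 0) (hu : 0 < u)
    (hW : W u = -lam / (p + 1) * u ^ (p + 1)) (hW' : deriv W u = -lam * u ^ p) :
    expr d W u = lam * u ^ (p + 1) * (d / (p + 1) - (d - 2) / 2) := by
  rw [expr, hW, hW', rpow_add_one hu.ne']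
  field_simp
  ring

theorem expr_ge_of_deriv_ge_of_le {d M b u v : ℝ} {W : ℝ → ℝ} (hd : 2 ≤ d) (hM : 0 ≤ M)
    (hu : 0 < u) (hub : u ≤ b) (hW' : -M ≤ deriv W u) (hWuv : W u ≤ W v) :
    (d - 2) / 2 * -M * b - d * W v ≤ expr d W u := by
  have hslope : -M * b ≤ deriv W u * u := calc
    -M * b ≤ -M * u := mul_le_mul_of_nonpos_left hub (neg_nonpos.mpr hM)
    _ ≤ deriv W u * u := mul_le_mul_of_nonneg_right hW' hu.le
  have := mul_le_mul_of_nonneg_left hslope (by linarith : 0 ≤ (d - 2) / 2)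
  rw [expr]
  nlinarith

theorem lowerBound_pos {d lam β p κ μ : ℝ} (hd : 2 < d) (hlam : 0 < lam) (hβ : 0 < β)
    (hp1 : 0 < p + 1) (hκμ : κ * μ < 1 + 2 * (d / (p + 1) - (d - 2) / 2) / (d - 2)) :
    0 < (d - 2) / 2 * -(lam * μ * β ^ p) * (κ * β) - d * (-lam / (p + 1) * β ^ (p + 1)) := by
  have hd2 : 0 < d - 2 := by linarith
  have hgap : (d - 2) / 2 * (κ * μ) < d / (p + 1) := by
    have := mul_lt_mul_of_pos_left hκμ (by positivity : 0 < (d - 2) / 2)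
    field_simp at this ⊢
    linarith
  have hfactor : (d - 2) / 2 * -(lam * μ * β ^ p) * (κ * β) - d * (-lam / (p + 1) * β ^ (p + 1))
      = lam * β ^ (p + 1) * (d / (p + 1) - (d - 2) / 2 * (κ * μ)) := by
    rw [rpow_add_one hβ.ne']
    field_simp
    ring
  rw [hfactor]
  have := rpow_pos_of_pos hβ (p + 1)
  have : 0 < d / (p + 1) - (d - 2) / 2 * (κ * μ) := by linarith
  positivity

end Pohozaev

open Pohozaev in
theorem stmt_7_general (n : ℕ) (hn : 3 ≤ n) (p lam β κ μ : ℝ)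
    (hp : p ∈ Ioo ((n : ℝ) / ((n : ℝ) - 2)) (((n : ℝ) + 2) / ((n : ℝ) - 2)))
    (hlam : 0 < lam) (hβ : 0 < β)
    (b : ℝ) (hb : b = κ * β)
    (ε : ℝ) (hε : ε = (n : ℝ) / (p + 1) - ((n : ℝ) - 2) / 2)
    (hκμ : κ * μ < 1 + 2 * ε / ((n : ℝ) - 2))
    (W : ℝ → ℝ) (hW : ContDiff ℝ 1 W) (hW0 : W 0 = 0)
    (hW1 : ∀ u ∈ Icc (0 : ℝ) β, deriv W u = -lam * u ^ p)
    (hW3 : ∀ u ∈ Icc (0 : ℝ) b, deriv W u ∈ Icc (-lam * μ * β ^ p) 0) :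
    ∀ u ∈ Ioc (0 : ℝ) b, ((n : ℝ) - 2) / 2 * deriv W u * u - n * W u > 0 := by
  rintro u ⟨hu, hub⟩
  have hn2 : (2 : ℝ) < n := by exact_mod_cast hn
  have hp0 : 0 < p := (div_pos (by linarith) (by linarith)).trans hp.1
  have hεpos : 0 < ε := by
    rw [hε, sub_pos, lt_div_iff₀ (by linarith)]
    nlinarith [(lt_div_iff₀ (by linarith : (0 : ℝ) < n - 2)).mp hp.2]
  have hWdiff : Differentiable ℝ W := hW.differentiable one_ne_zero
  have hWexplicit := eqOn_Icc_of_deriv_eq_mul_rpow hp0.le hWdiff hW0 hW1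
  change 0 < expr n W u
  rcases le_or_gt u β with huβ | hβu
  · rw [expr_eq_of_rpow (by linarith) hu (hWexplicit u ⟨hu.le, huβ⟩) (hW1 u ⟨hu.le, huβ⟩), ← hε]
    positivity
  · have hWanti : AntitoneOn W (Icc 0 b) :=
      antitoneOn_of_deriv_nonpos (convex_Icc 0 b) hWdiff.continuous.continuousOn
        hWdiff.differentiableOn fun x hx ↦ (hW3 x (interior_subset hx)).2
    have hslope := hW3 u ⟨hu.le, hub⟩
    have hM : 0 ≤ lam * μ * β ^ p := by linarith [hslope.1, hslope.2]
    refine (lowerBound_pos hn2 hlam hβ (by linarith) (hε ▸ hκμ)).trans_le ?_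
    rw [← hb, ← hWexplicit β ⟨hβ.le, le_rfl⟩]
    exact expr_ge_of_deriv_ge_of_le hn2.le hM hu hub (by linarith [hslope.1])
      (hWanti ⟨hβ.le, (hβu.trans_le hub).le⟩ ⟨hu.le, hub⟩ hβu.le)

theorem stmt_7 (n : ℕ) (hn : 3 ≤ n) (p lam β κ μ : ℝ)
    (hp : p ∈ Ioo ((n : ℝ) / ((n : ℝ) - 2)) (((n : ℝ) + 2) / ((n : ℝ) - 2)))
    (hlam : 0 < lam) (hβ : 0 < β) (hκ : 1 < κ) (hμ : 1 < μ)
    (b : ℝ) (hb : b = κ * β)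
    (ε : ℝ) (hε : ε = (n : ℝ) / (p + 1) - ((n : ℝ) - 2) / 2)
    (hκμ : κ * μ < 1 + 2 * ε / ((n : ℝ) - 2))
    (W : ℝ → ℝ) (hW : ContDiff ℝ 1 W) (hW0 : W 0 = 0)
    (hW1 : ∀ u ∈ Icc (0 : ℝ) β, deriv W u = -lam * u ^ p)
    (hW2 : ∀ u ∈ Ioo (0 : ℝ) b, deriv W u < 0)
    (hWb : deriv W b = 0)
    (hW3 : ∀ u ∈ Icc (0 : ℝ) b, deriv W u ∈ Icc (-lam * μ * β ^ p) 0) :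
    ∀ u ∈ Ioc (0 : ℝ) b, ((n : ℝ) - 2) / 2 * deriv W u * u - n * W u > 0 :=
  stmt_7_general n hn p lam β κ μ hp hlam hβ b hb ε hε hκμ W hW hW0 hW1 hW3
end

section
/- Let n = 3 and for integers k ≥ 2, set μ_k = c₃ k^(-2)(log k)^(-2) with c₃ > 0, ξ_{j,k} = (cos(2πj/k), sin(2πj/k), 0) for 1 ≤ j ≤ k, U(x) = (2/(1+|x|²))^(1/2), and v_k(x) = U(x) - Σ_{j=1}^k μ_k^(-1/2) U(μ_k^(-1)(x - ξ_{j,k})). Then there exist r̄ > 0 and k̄ such that v_k(x) > (2/3) U(x) > 0 whenever |x| > r̄ and k ≥ k̄. -/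
/-!
Far from the unit circle, `|x - ξ| ≥ |x| / 2`, so each bubble
`μ^(-1/2) U(μ⁻¹(x - ξ))` is at most `√2 √μ / |x - ξ| ≤ 2√2 √μ / |x|`, while `U x ≥ 1 / |x|`.
Summing the `k` bubbles gives at most `2√2 k √μ_k · U x = (2√2 √c₃ / log k) · U x`,
which is below `U x / 3` for large `k`.
-/

open Real MeasureTheory Filter Set

lemma rpow_half_two_div_one_add_sq_le {r : ℝ} (hr : 0 < r) :
    (2 / (1 + r ^ 2)) ^ ((1 : ℝ) / 2) ≤ √2 / r := by
  rw [← Real.sqrt_eq_rpow]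
  calc √(2 / (1 + r ^ 2)) ≤ √(2 / r ^ 2) := by gcongr; linarith
    _ = √2 / r := by rw [Real.sqrt_div' _ (sq_nonneg r), Real.sqrt_sq hr.le]

lemma inv_le_rpow_half_two_div_one_add_sq {r : ℝ} (hr : 1 ≤ r) :
    r⁻¹ ≤ (2 / (1 + r ^ 2)) ^ ((1 : ℝ) / 2) := by
  rw [← Real.sqrt_eq_rpow, Real.le_sqrt' (by positivity), inv_pow,
    inv_le_iff_one_le_mul₀ (by positivity), div_mul_eq_mul_div, one_le_div (by positivity)]
  nlinarith

lemma rpow_neg_half_mul_bubble_le {E : Type*} [NormedAddCommGroup E] [NormedSpace ℝ E]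
    {μ : ℝ} (hμ : 0 < μ) {y : E} (hy : y ≠ 0) :
    μ ^ (-(1 : ℝ) / 2) * (2 / (1 + ‖μ⁻¹ • y‖ ^ 2)) ^ ((1 : ℝ) / 2) ≤ √2 * √μ / ‖y‖ := by
  have hμy : 0 < ‖μ⁻¹ • y‖ := norm_pos_iff.2 (smul_ne_zero (inv_ne_zero hμ.ne') hy)
  calc _ ≤ μ ^ (-(1 : ℝ) / 2) * (√2 / ‖μ⁻¹ • y‖) := by
        gcongr; exact rpow_half_two_div_one_add_sq_le hμy
    _ = √2 * √μ / ‖y‖ := by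
      rw [norm_smul, Real.norm_of_nonneg (inv_nonneg.2 hμ.le), neg_div, Real.rpow_neg hμ.le,
        ← Real.sqrt_eq_rpow]
      field_simp
      rw [Real.sq_sqrt hμ.le]

lemma half_norm_le_norm_sub {E : Type*} [SeminormedAddCommGroup E] {x ξ : E}
    (hx : 2 ≤ ‖x‖) (hξ : ‖ξ‖ ≤ 1) : ‖x‖ / 2 ≤ ‖x - ξ‖ := by
  linarith [norm_sub_norm_le x ξ]

lemma norm_equiv_symm_cos_sin_zero (θ : ℝ) :
    ‖(EuclideanSpace.equiv (Fin 3) ℝ).symm ![Real.cos θ, Real.sin θ, 0]‖ = 1 := by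
  simp [EuclideanSpace.norm_eq, Fin.sum_univ_three]

lemma sqrt_mul_rpow_neg_two_mul_log_rpow_neg_two (c : ℝ) {k : ℝ} (hk : 1 < k) :
    √(c * k ^ (-(2 : ℝ)) * Real.log k ^ (-(2 : ℝ))) = √c / (k * Real.log k) := by
  have hlog : 0 < Real.log k := Real.log_pos hk
  rw [Real.rpow_neg (by linarith), Real.rpow_neg hlog.le, Real.rpow_two, Real.rpow_two,
    ← div_eq_mul_inv, ← div_eq_mul_inv, div_div, ← mul_pow,
    Real.sqrt_div' _ (sq_nonneg _), Real.sqrt_sq (by positivity)]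

lemma sum_bubbles_le {ι E : Type*} [NormedAddCommGroup E] [NormedSpace ℝ E] (s : Finset ι)
    {μ : ℝ} (hμ : 0 < μ) {ξ : ι → E} (hξ : ∀ j ∈ s, ‖ξ j‖ ≤ 1) {x : E} (hx : 2 < ‖x‖) :
    ∑ j ∈ s, μ ^ (-(1 : ℝ) / 2) * (2 / (1 + ‖μ⁻¹ • (x - ξ j)‖ ^ 2)) ^ ((1 : ℝ) / 2)
      ≤ s.card * (2 * √2 * √μ / ‖x‖) := by
  rw [← nsmul_eq_mul]
  refine Finset.sum_le_card_nsmul _ _ _ fun j hj ↦ ?_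
  have hsub := half_norm_le_norm_sub hx.le (hξ j hj)
  have hpos : 0 < ‖x - ξ j‖ := by linarith
  calc _ ≤ √2 * √μ / ‖x - ξ j‖ := rpow_neg_half_mul_bubble_le hμ (norm_pos_iff.1 hpos)
    _ ≤ √2 * √μ / (‖x‖ / 2) := by gcongr
    _ = 2 * √2 * √μ / ‖x‖ := by ring

theorem stmt_11 (c₃ : ℝ) (hc₃ : 0 < c₃)
    (U : EuclideanSpace ℝ (Fin 3) → ℝ)
    (hU : ∀ x, U x = (2 / (1 + ‖x‖ ^ 2)) ^ ((1 : ℝ) / 2))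
    (μ : ℕ → ℝ) (hμ : ∀ k : ℕ, μ k = c₃ * (k : ℝ) ^ (-(2 : ℝ)) * (Real.log k) ^ (-(2 : ℝ)))
    (ξ : ℕ → ℕ → EuclideanSpace ℝ (Fin 3))
    (hξ : ∀ j k : ℕ, ξ j k = (EuclideanSpace.equiv (Fin 3) ℝ).symm
      ![Real.cos (2 * π * j / k), Real.sin (2 * π * j / k), 0])
    (v : ℕ → EuclideanSpace ℝ (Fin 3) → ℝ)
    (hv : ∀ (k : ℕ) x, v k x =
      U x - ∑ j ∈ Finset.Icc 1 k, (μ k) ^ (-(1 : ℝ) / 2) * U ((μ k)⁻¹ • (x - ξ j k))) :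
    ∃ rbar > (0 : ℝ), ∃ kbar : ℕ, 2 ≤ kbar ∧ ∀ k ≥ kbar, ∀ x, rbar < ‖x‖ →
      (2 / 3) * U x < v k x ∧ 0 < (2 / 3) * U x := by
  set ε : ℕ → ℝ := fun k ↦ 2 * √2 * √c₃ / Real.log k
  have hε : Tendsto ε atTop (nhds 0) :=
    tendsto_const_nhds.div_atTop (tendsto_log_atTop.comp tendsto_natCast_atTop_atTop)
  obtain ⟨kbar, hkbar⟩ := eventually_atTop.1
    ((eventually_ge_atTop 2).and (hε.eventually (gt_mem_nhds (by norm_num : (0 : ℝ) < 1 / 3))))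
  refine ⟨2, two_pos, max kbar 2, le_max_right _ _, fun k hk x hx ↦ ?_⟩
  obtain ⟨hk2, hεk⟩ := hkbar k (le_of_max_le_left hk)
  have hk1 : (1 : ℝ) < k := by exact_mod_cast hk2
  have hlog : 0 < Real.log k := Real.log_pos hk1
  have hμk : 0 < μ k := by rw [hμ]; positivity
  have hUx : 0 < U x := by rw [hU]; positivity
  have hsum : ∑ j ∈ Finset.Icc 1 k, μ k ^ (-(1 : ℝ) / 2) * U ((μ k)⁻¹ • (x - ξ j k))
      ≤ ε k * U x :=
    calc _ ≤ (Finset.Icc 1 k).card * (2 * √2 * √(μ k) / ‖x‖) := by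
          simp_rw [hU]
          exact sum_bubbles_le _ hμk (fun j _ ↦ (hξ j k ▸ norm_equiv_symm_cos_sin_zero _).le) hx
      _ = ε k * ‖x‖⁻¹ := by
          rw [Nat.card_Icc, Nat.add_sub_cancel, hμ,
            sqrt_mul_rpow_neg_two_mul_log_rpow_neg_two c₃ hk1]
          simp only [ε]
          field_simp
      _ ≤ ε k * U x := by
          gcongr
          rw [hU]
          exact inv_le_rpow_half_two_div_one_add_sq (by linarith)
  refine ⟨?_, by positivity⟩
  rw [hv]
  nlinarith
end
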